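/- Let H : ℝⁿ → ℝ and let ∇̄H : ℝⁿ × ℝⁿ → ℝⁿ be a discrete gradient of H, i.e., ⟨∇̄H(z, z'), z' − z⟩ = H(z') − H(z) for all z, z'. Let J be skew-symmetric, R symmetric positive semi-definite, τ > 0, and suppose the discrete-gradient scheme [τ∂̄_{z₁}H(zⁿ,z^{n+1}); z₂^{n+1}−z₂ⁿ; 0] = (J−R)[z₁^{n+1}−z₁ⁿ; τ∂̄_{z₂}H(zⁿ,z^{n+1}); τz₃^{n+1/2}] holds (zero input). Then H(z^{n+1}) ≤ H(zⁿ). -/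

import Mathlib

/-! Pair the two sides of the scheme, `u = (J - R) v`, with `v`. Since the `z₃`-rows of `u`
vanish, the secant property of the discrete gradient turns `u ⬝ v` into
`τ (H(zⁿ⁺¹) - H(zⁿ))`; on the other hand skew-symmetry of `J` kills `Jv ⬝ v`, leaving
`u ⬝ v = -vᵀ R v ≤ 0`. -/

open Matrix

theorem Fin.append_dotProduct_append {α : Type*} [Mul α] [AddCommMonoid α] {m n : ℕ}
    (a c : Fin m → α) (b d : Fin n → α) :
    Fin.append a b ⬝ᵥ Fin.append c d = a ⬝ᵥ c + b ⬝ᵥ d := by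
  simp [dotProduct, Fin.sum_univ_add]

theorem Fin.append_sub_append {α : Type*} [Sub α] {m n : ℕ} (a c : Fin m → α)
    (b d : Fin n → α) : Fin.append a b - Fin.append c d = Fin.append (a - c) (b - d) := by
  ext i
  refine Fin.addCases (fun i => ?_) (fun i => ?_) i <;> simp

theorem mulVec_dotProduct_self_eq_zero_of_transpose_eq_neg {ι α : Type*} [Fintype ι]
    [CommRing α] [IsAddTorsionFree α] {J : Matrix ι ι α} (hJ : Jᵀ = -J) (x : ι → α) :
    J *ᵥ x ⬝ᵥ x = 0 := by
  refine self_eq_neg.mp ?_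
  conv_lhs => rw [dotProduct_comm, dotProduct_mulVec, ← mulVec_transpose, hJ, neg_mulVec,
    neg_dotProduct]

theorem sub_mulVec_dotProduct_self_nonpos {ι : Type*} [Fintype ι] {J R : Matrix ι ι ℝ}
    (hJ : Jᵀ = -J) (hR : R.PosSemidef) (v : ι → ℝ) : (J - R) *ᵥ v ⬝ᵥ v ≤ 0 := by
  have hRv : 0 ≤ v ⬝ᵥ R *ᵥ v := by simpa using hR.dotProduct_mulVec_nonneg v
  rw [sub_mulVec, sub_dotProduct, mulVec_dotProduct_self_eq_zero_of_transpose_eq_neg hJ,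
    dotProduct_comm]
  linarith

theorem Fin.append_blocks_dotProduct_eq_mul_dotProduct_sub {α : Type*} [CommRing α]
    {n₁ n₂ n₃ : ℕ} (g : Fin (n₁ + n₂) → α) (τ : α) (z₁ w₁ : Fin n₁ → α)
    (z₂ w₂ : Fin n₂ → α) (c : Fin n₃ → α) :
    Fin.append (Fin.append (τ • fun i => g (Fin.castAdd n₂ i)) (w₂ - z₂)) (0 : Fin n₃ → α) ⬝ᵥ
        Fin.append (Fin.append (w₁ - z₁) (τ • fun i => g (Fin.natAdd n₁ i))) c
      = τ * (g ⬝ᵥ (Fin.append w₁ w₂ - Fin.append z₁ z₂)) := by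
  conv_rhs => rw [Fin.append_sub_append, ← Fin.append_castAdd_natAdd (f := g)]
  simp only [Fin.append_dotProduct_append, zero_dotProduct, add_zero, smul_dotProduct,
    smul_eq_mul, mul_add, dotProduct_comm (w₂ - z₂)]

theorem stmt_9 {n₁ n₂ n₃ : ℕ}
    (H : (Fin (n₁ + n₂) → ℝ) → ℝ)
    -- discrete gradient of H satisfying the secant property
    (DG : (Fin (n₁ + n₂) → ℝ) → (Fin (n₁ + n₂) → ℝ) → (Fin (n₁ + n₂) → ℝ))
    (hDG : ∀ z z' : Fin (n₁ + n₂) → ℝ, DG z z' ⬝ᵥ (z' - z) = H z' - H z)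
    (J R : Matrix (Fin (n₁ + n₂ + n₃)) (Fin (n₁ + n₂ + n₃)) ℝ)
    (hJ : Jᵀ = -J) (hR : R.PosSemidef)
    (τ : ℝ) (hτ : 0 < τ)
    -- zⁿ = (z₁, z₂, z₃) and z^{n+1} = (w₁, w₂, w₃)
    (z₁ w₁ : Fin n₁ → ℝ) (z₂ w₂ : Fin n₂ → ℝ) (z₃ w₃ : Fin n₃ → ℝ)
    -- discrete-gradient scheme (zero input); ∂̄_{z₁}H and ∂̄_{z₂}H are the
    -- first n₁ and last n₂ components of the discrete gradient ∇̄H(zⁿ, z^{n+1})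
    (hsys : Fin.append (Fin.append
        (τ • fun i : Fin n₁ =>
          DG (Fin.append z₁ z₂) (Fin.append w₁ w₂) (Fin.castAdd n₂ i))
        (w₂ - z₂)) (0 : Fin n₃ → ℝ)
      = (J - R).mulVec (Fin.append (Fin.append (w₁ - z₁)
          (τ • fun i : Fin n₂ =>
            DG (Fin.append z₁ z₂) (Fin.append w₁ w₂) (Fin.natAdd n₁ i)))
          (τ • ((1 / 2 : ℝ) • (z₃ + w₃))))) :
    H (Fin.append w₁ w₂) ≤ H (Fin.append z₁ z₂) := by
  have hdissipation := sub_mulVec_dotProduct_self_nonpos hJ hR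
    (Fin.append (Fin.append (w₁ - z₁)
      (τ • fun i : Fin n₂ => DG (Fin.append z₁ z₂) (Fin.append w₁ w₂) (Fin.natAdd n₁ i)))
      (τ • ((1 / 2 : ℝ) • (z₃ + w₃))))
  rw [← hsys, Fin.append_blocks_dotProduct_eq_mul_dotProduct_sub, hDG] at hdissipation
  exact sub_nonpos.mp (nonpos_of_mul_nonpos_right hdissipation hτ)
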